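/- arXiv:1906.07832 — 2 statements merged into one kernel-verified Lean document; each statement's English description precedes it below -/
import Mathlib

section
/- Let x = (x_1,…,x_N) ∈ X^N with det E(x) ≠ 0 and let g ∈ L²(dω) with ‖g‖_{L²(dω)} ≤ 1. Set ‖g‖_{dω,1} := ∑_{n=1}^N |⟨e_n, g⟩_{L²(dω)}|. Then ‖Π_{T(x)^⊥} μ_g‖_F² ≤ 2 ( σ_{N+1} + ‖g‖_{dω,1}² · max_{n∈[N]} σ_n ‖Π_{T(x)^⊥} e_n^F‖_F² ). -/
/-!
Write `c_m = ⟨e_m, g⟩` and split `μ_g = A + B` at index `N`, with `A = ∑_{m ≤ N} √σ_m c_m e_m^F`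
and `B` the tail. As `Π = Π_{T(x)^⊥}` is a contraction,
`‖Π B‖² ≤ ‖B‖² = ∑_{m > N} σ_m c_m² ≤ σ_{N+1} ∑_m c_m² ≤ σ_{N+1}` by monotonicity of `σ` and
Bessel's inequality, while the triangle inequality gives
`‖Π A‖ ≤ ∑_{m ≤ N} |c_m| √(σ_m ‖Π e_m^F‖²) ≤ ‖g‖_{dω,1} · max_n √(σ_n ‖Π e_n^F‖²)`.
Conclude with `(a + b)² ≤ 2 (a² + b²)`.
-/

open scoped RealInnerProductSpace BigOperators
open MeasureTheory

noncomputable instance spanRangeFiniteDimensional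
    {F : Type*} [NormedAddCommGroup F] [InnerProductSpace ℝ F] {ι : Type*} [Finite ι]
    (f : ι → F) : FiniteDimensional ℝ (Submodule.span ℝ (Set.range f)) :=
  FiniteDimensional.span_of_finite ℝ (Set.finite_range f)

theorem sq_sqrt_mul_le_mul_sq {a b : ℝ} (ha : 0 ≤ a) (hab : a ≤ b) (c : ℝ) :
    (√a * c) ^ 2 ≤ b * c ^ 2 := by
  rw [mul_pow, Real.sq_sqrt ha]
  exact mul_le_mul_of_nonneg_right hab (sq_nonneg c)

namespace Orthonormal

variable {ι F : Type*} [NormedAddCommGroup F] [InnerProductSpace ℝ F]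
  {v : ι → F} {a : ι → ℝ} {s : F}

theorem summable_smul_of_summable_sq [CompleteSpace F] (hv : Orthonormal ℝ v)
    (ha : Summable fun i => a i ^ 2) : Summable fun i => a i • v i := by
  simpa [LinearIsometry.toSpanSingleton_apply] using
    (hv.orthogonalFamily.summable_iff_norm_sq_summable a).mpr (by simpa using ha)

theorem inner_left_eq_of_hasSum_smul (hv : Orthonormal ℝ v)
    (hs : HasSum (fun i => a i • v i) s) (j : ι) : ⟪v j, s⟫ = a j := by
  classical
  have h := (innerSL ℝ (v j)).hasSum hs
  simp only [innerSL_apply_apply, real_inner_smul_right, orthonormal_iff_ite.mp hv j,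
    mul_ite, mul_one, mul_zero] at h
  exact (h.unique (hasSum_single j fun i hi => if_neg (Ne.symm hi))).trans (if_pos rfl)

theorem hasSum_sq_of_hasSum_smul (hv : Orthonormal ℝ v)
    (hs : HasSum (fun i => a i • v i) s) : HasSum (fun i => a i ^ 2) (‖s‖ ^ 2) := by
  have hterm : ∀ i, innerSL ℝ s (a i • v i) = a i ^ 2 := fun i => by
    rw [innerSL_apply_apply, real_inner_smul_right, real_inner_comm,
      hv.inner_left_eq_of_hasSum_smul hs, sq]
  simpa only [hterm, innerSL_apply_apply, real_inner_self_eq_norm_sq] using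
    (innerSL ℝ s).hasSum hs

theorem norm_sq_tsum_smul_le [CompleteSpace F] (hv : Orthonormal ℝ v) {b c : ι → ℝ} {K : ℝ}
    (hc : Summable fun i => c i ^ 2) (hbc : ∀ i, b i ^ 2 ≤ K * c i ^ 2) :
    ‖∑' i, b i • v i‖ ^ 2 ≤ K * ∑' i, c i ^ 2 := by
  have hb : Summable fun i => b i ^ 2 :=
    (hc.mul_left K).of_nonneg_of_le (fun i => sq_nonneg _) hbc
  rw [(hv.hasSum_sq_of_hasSum_smul (hv.summable_smul_of_summable_sq hb).hasSum).tsum_eq.symm,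
    ← tsum_mul_left]
  exact hb.tsum_le_tsum hbc (hc.mul_left K)

end Orthonormal

section L2

variable {X : Type*} [MeasurableSpace X] {ω : Measure X}

theorem MeasureTheory.MemLp.inner_toLp_toLp {f g : X → ℝ} (hf : MemLp f 2 ω) (hg : MemLp g 2 ω) :
    ⟪hf.toLp f, hg.toLp g⟫ = ∫ z, f z * g z ∂ω := by
  rw [L2.inner_def]
  refine integral_congr_ae ?_
  filter_upwards [hf.coeFn_toLp, hg.coeFn_toLp] with z hfz hgz
  simp [hfz, hgz, mul_comm]

theorem MeasureTheory.memLp_two_of_integral_mul_self_ne_zero {f : X → ℝ}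
    (hf : AEStronglyMeasurable f ω) (h : ∫ z, f z * f z ∂ω ≠ 0) : MemLp f 2 ω :=
  (memLp_two_iff_integrable_sq hf).mpr (by simpa [sq] using Integrable.of_integral_ne_zero h)

variable {ι : Type*} {e : ι → X → ℝ} {g : X → ℝ}

theorem orthonormal_toLp_of_integral_mul [DecidableEq ι] (he : ∀ i, MemLp (e i) 2 ω)
    (he_on : ∀ i j, ∫ z, e i z * e j z ∂ω = if i = j then 1 else 0) :
    Orthonormal ℝ fun i => (he i).toLp (e i) :=
  orthonormal_iff_ite.mpr fun i j => by rw [MemLp.inner_toLp_toLp, he_on]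

theorem summable_sq_integral_mul_and_tsum_le [DecidableEq ι]
    (he_meas : ∀ i, AEStronglyMeasurable (e i) ω)
    (he_on : ∀ i j, ∫ z, e i z * e j z ∂ω = if i = j then 1 else 0) (hg : MemLp g 2 ω) :
    (Summable fun i => (∫ z, e i z * g z ∂ω) ^ 2) ∧
      ∑' i, (∫ z, e i z * g z ∂ω) ^ 2 ≤ ∫ z, g z ^ 2 ∂ω := by
  have he : ∀ i, MemLp (e i) 2 ω := fun i =>
    memLp_two_of_integral_mul_self_ne_zero (he_meas i) (by simp [he_on])
  have hON := orthonormal_toLp_of_integral_mul he he_on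
  have hcoef : ∀ i, ‖⟪(he i).toLp (e i), hg.toLp g⟫‖ ^ 2 = (∫ z, e i z * g z ∂ω) ^ 2 := by
    intro i; rw [MemLp.inner_toLp_toLp, Real.norm_eq_abs, sq_abs]
  have hnorm : ‖hg.toLp g‖ ^ 2 = ∫ z, g z ^ 2 ∂ω := by
    rw [← real_inner_self_eq_norm_sq, MemLp.inner_toLp_toLp]; simp [sq]
  refine ⟨?_, ?_⟩
  · simpa only [hcoef] using hON.inner_products_summable (hg.toLp g)
  · simpa only [hcoef, hnorm] using hON.tsum_inner_products_le (hg.toLp g)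

end L2

section WeightedSeries

variable {F : Type*} [NormedAddCommGroup F] [InnerProductSpace ℝ F]

theorem norm_sum_sqrt_mul_smul_le {ι : Type*} {s : Finset ι} {w c : ι → ℝ} {u : ι → F} {M : ℝ}
    (hw : ∀ i ∈ s, 0 ≤ w i) (hM : ∀ i ∈ s, w i * ‖u i‖ ^ 2 ≤ M) :
    ‖∑ i ∈ s, (√(w i) * c i) • u i‖ ≤ (∑ i ∈ s, |c i|) * √M := by
  refine (norm_sum_le _ _).trans ?_
  rw [Finset.sum_mul]
  refine Finset.sum_le_sum fun i hi => ?_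
  calc ‖(√(w i) * c i) • u i‖ = |c i| * √(w i * ‖u i‖ ^ 2) := by
        rw [norm_smul, Real.norm_eq_abs, abs_mul, abs_of_nonneg (Real.sqrt_nonneg _),
          Real.sqrt_mul (hw i hi), Real.sqrt_sq (norm_nonneg _)]
        ring
    _ ≤ |c i| * √M := by gcongr; exact hM i hi

theorem norm_sq_sum_range_sqrt_mul_smul_le {N : ℕ} (hN : 0 < N) {σ c : ℕ → ℝ}
    (hσ : ∀ m, 0 ≤ σ m) (u : ℕ → F) :
    ‖∑ m ∈ Finset.range N, (√(σ m) * c m) • u m‖ ^ 2 ≤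
      (∑ n : Fin N, |c n|) ^ 2 * Finset.univ.sup' (Finset.univ_nonempty_iff.mpr ⟨⟨0, hN⟩⟩)
        (fun n : Fin N => σ n * ‖u n‖ ^ 2) := by
  set M := Finset.univ.sup' (Finset.univ_nonempty_iff.mpr ⟨⟨0, hN⟩⟩)
    (fun n : Fin N => σ n * ‖u n‖ ^ 2)
  have hle : ∀ m < N, σ m * ‖u m‖ ^ 2 ≤ M := fun m hm =>
    Finset.le_sup' (fun n : Fin N => σ n * ‖u n‖ ^ 2) (Finset.mem_univ ⟨m, hm⟩)
  have hM : 0 ≤ M := (mul_nonneg (hσ 0) (sq_nonneg _)).trans (hle 0 hN)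
  calc _ ≤ ((∑ m ∈ Finset.range N, |c m|) * √M) ^ 2 := by
        gcongr
        exact norm_sum_sqrt_mul_smul_le (fun m _ => hσ m) fun m hm =>
          hle m (Finset.mem_range.mp hm)
    _ = _ := by rw [mul_pow, Real.sq_sqrt hM, Fin.sum_univ_eq_sum_range (fun m => |c m|)]

theorem norm_sq_tsum_nat_add_sqrt_mul_smul_le [CompleteSpace F] {v : ℕ → F}
    (hv : Orthonormal ℝ v) {σ c : ℕ → ℝ} (hσ0 : ∀ m, 0 ≤ σ m) (hσ : Antitone σ)
    (hc : Summable fun m => c m ^ 2) (N : ℕ) :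
    ‖∑' m, (√(σ (m + N)) * c (m + N)) • v (m + N)‖ ^ 2 ≤ σ N * ∑' m, c m ^ 2 := by
  refine ((hv.comp _ (add_left_injective N)).norm_sq_tsum_smul_le
    ((summable_nat_add_iff N).mpr hc)
    fun m => sq_sqrt_mul_le_mul_sq (hσ0 _) (hσ (Nat.le_add_left N m)) _).trans ?_
  rw [← hc.sum_add_tsum_nat_add N]
  exact mul_le_mul_of_nonneg_left
    (le_add_of_nonneg_left (Finset.sum_nonneg fun m _ => sq_nonneg _)) (hσ0 N)

theorem Submodule.norm_sq_orthogonalProjectionOnto_add_le (K : Submodule ℝ F)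
    [K.HasOrthogonalProjection] (u w : F) :
    ‖(K.orthogonalProjectionOnto (u + w) : F)‖ ^ 2 ≤
      2 * (‖(K.orthogonalProjectionOnto u : F)‖ ^ 2 + ‖w‖ ^ 2) := by
  refine le_trans ?_ add_sq_le
  rw [map_add, Submodule.coe_add]
  gcongr
  exact (norm_add_le _ _).trans (by gcongr; exact K.norm_orthogonalProjectionOnto_apply_le w)

end WeightedSeries

theorem stmt3_general {X : Type*} [MeasurableSpace X] (ω : Measure X)
    (e : ℕ → X → ℝ) (he_meas : ∀ m, Measurable (e m))
    (he_on : ∀ m n : ℕ, ∫ z, e m z * e n z ∂ω = if m = n then 1 else 0)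
    (σ : ℕ → ℝ) (hσpos : ∀ m, 0 < σ m) (hσanti : Antitone σ)
    {F : Type*} [NormedAddCommGroup F] [InnerProductSpace ℝ F] [CompleteSpace F]
    (eF : ℕ → F) (heF : Orthonormal ℝ eF)
    (Kf : X → F)
    (N : ℕ) (hN : 0 < N) (x : Fin N → X)
    (g : X → ℝ) (hg_meas : Measurable g)
    (hg2 : Integrable (fun z => (g z) ^ 2) ω)
    (hgnorm : ∫ z, (g z) ^ 2 ∂ω ≤ 1)
    (μg : F) (hμg : μg = ∑' m : ℕ, (Real.sqrt (σ m) * ∫ z, e m z * g z ∂ω) • eF m) :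
    ‖(Submodule.orthogonalProjection (Submodule.span ℝ (Set.range fun j => Kf (x j)))ᗮ μg : F)‖ ^ 2
      ≤ 2 * (σ N + (∑ n : Fin N, |∫ z, e n.val z * g z ∂ω|) ^ 2 *
          Finset.univ.sup' (Finset.univ_nonempty_iff.mpr ⟨⟨0, hN⟩⟩)
            (fun n : Fin N =>
              σ n.val *
                ‖(Submodule.orthogonalProjection (Submodule.span ℝ (Set.range fun j => Kf (x j)))ᗮ
                    (eF n.val) : F)‖ ^ 2)) := by
  set c : ℕ → ℝ := fun m => ∫ z, e m z * g z ∂ω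
  obtain ⟨hc, hc_le⟩ := summable_sq_integral_mul_and_tsum_le
    (fun m => (he_meas m).aestronglyMeasurable) he_on
    ((memLp_two_iff_integrable_sq hg_meas.aestronglyMeasurable).mpr hg2)
  have hsum : Summable fun m => (√(σ m) * c m) • eF m :=
    heF.summable_smul_of_summable_sq <| (hc.mul_left (σ 0)).of_nonneg_of_le
      (fun m => sq_nonneg _) fun m => sq_sqrt_mul_le_mul_sq (hσpos m).le (hσanti m.zero_le) _
  have hhead := norm_sq_sum_range_sqrt_mul_smul_le hN (c := c) (fun m => (hσpos m).le)
    fun m => ((Submodule.span ℝ (Set.range fun j => Kf (x j)))ᗮ.orthogonalProjectionOnto (eF m) : F)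
  have htail : ‖∑' m, (√(σ (m + N)) * c (m + N)) • eF (m + N)‖ ^ 2 ≤ σ N :=
    (norm_sq_tsum_nat_add_sqrt_mul_smul_le heF (fun m => (hσpos m).le) hσanti hc N).trans
      (mul_le_of_le_one_right (hσpos N).le (hc_le.trans hgnorm))
  simp only [← map_smul, ← Submodule.coe_smul, ← Submodule.coe_sum, ← map_sum] at hhead
  rw [hμg, ← hsum.sum_add_tsum_nat_add N]
  refine (Submodule.norm_sq_orthogonalProjectionOnto_add_le _ _ _).trans ?_
  linarith

/-- For nodes with `det E(x) ≠ 0` and `‖g‖_{L²} ≤ 1`,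
`‖Π_{T(x)^⊥} μ_g‖_F² ≤ 2 (σ_{N+1} + ‖g‖_{dω,1}² · max_{n∈[N]} σ_n ‖Π_{T(x)^⊥} e_n^F‖_F²)`.
(Indices are 0-based: `σ 0` is the paper's `σ_1`, `σ N` is `σ_{N+1}`.) -/
theorem stmt3 {X : Type*} [MeasurableSpace X] (ω : Measure X) [IsProbabilityMeasure ω]
    (e : ℕ → X → ℝ) (he_meas : ∀ m, Measurable (e m))
    (he_on : ∀ m n : ℕ, ∫ z, e m z * e n z ∂ω = if m = n then 1 else 0)
    (σ : ℕ → ℝ) (hσpos : ∀ m, 0 < σ m) (hσanti : Antitone σ) (hσsum : Summable σ)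
    (hdiag : ∀ z : X, Summable fun m => σ m * (e m z) ^ 2)
    {F : Type*} [NormedAddCommGroup F] [InnerProductSpace ℝ F] [CompleteSpace F]
    (eF : ℕ → F) (heF : Orthonormal ℝ eF)
    (heFtot : (Submodule.span ℝ (Set.range eF)).topologicalClosure = ⊤)
    (Kf : X → F) (hKf : ∀ (z : X) (m : ℕ), ⟪eF m, Kf z⟫ = Real.sqrt (σ m) * e m z)
    (N : ℕ) (hN : 0 < N) (x : Fin N → X)
    (hEdet : (Matrix.of fun i j : Fin N => e i.val (x j)).det ≠ 0)
    (g : X → ℝ) (hg_meas : Measurable g)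
    (hg2 : Integrable (fun z => (g z) ^ 2) ω)
    (hgnorm : ∫ z, (g z) ^ 2 ∂ω ≤ 1)
    (μg : F) (hμg : μg = ∑' m : ℕ, (Real.sqrt (σ m) * ∫ z, e m z * g z ∂ω) • eF m) :
    ‖(Submodule.orthogonalProjection (Submodule.span ℝ (Set.range fun j => Kf (x j)))ᗮ μg : F)‖ ^ 2
      ≤ 2 * (σ N + (∑ n : Fin N, |∫ z, e n.val z * g z ∂ω|) ^ 2 *
          Finset.univ.sup' (Finset.univ_nonempty_iff.mpr ⟨⟨0, hN⟩⟩)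
            (fun n : Fin N =>
              σ n.val *
                ‖(Submodule.orthogonalProjection (Submodule.span ℝ (Set.range fun j => Kf (x j)))ᗮ
                    (eF n.val) : F)‖ ^ 2)) :=
  stmt3_general ω e he_meas he_on σ hσpos hσanti eF heF Kf N hN x g hg_meas hg2 hgnorm μg hμg
end

section
/- Let N ≥ 1 and set r_N := ∑_{m≥N+1} σ_m. Then the expectation under the projection DPP satisfies E_DPP[ max_{n∈[N]} σ_n ‖Π_{T(x)^⊥} e_n^F‖_F² ] ≤ σ_1 ∑_{ℓ=1}^N (1/ℓ!²) ( N·r_N / σ_1 )^ℓ. -/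
/-!
Fix `x` and `n`, let `A = E(x)` and `g = ∑ⱼ adj(A)ⱼₙ k(xⱼ, ·) ∈ T(x)`. By Cramer's rule the
`e_m^F`-coefficient of `v = √σₙ det A · e_n^F - g` is, up to the term `m = n`, `-√σₘ` times the
determinant `Dₘ` of `A` with row `n` replaced by `(e_m(x_j))_j`; it vanishes for `m ≤ N`. As
`g ∈ T(x)`, `Π_{T(x)^⊥} v = √σₙ det A · Π_{T(x)^⊥} e_n^F`, so Parseval gives
`σₙ ‖Π_{T(x)^⊥} e_n^F‖² det(A)² ≤ ‖v‖² = ∑_{m > N} σₘ Dₘ²`.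
Each `Dₘ` is again the determinant of `N` orthonormal functions, so `Dₘ²` integrates to `N!`
against `dω^N` (Andréief). Bounding the maximum over `n` by the sum gives `E_DPP[…] ≤ N r_N`,
the `ℓ = 1` term of the right-hand side.
-/

open scoped RealInnerProductSpace BigOperators
open MeasureTheory

theorem Matrix.det_updateRow_eq_sum_mul_adjugate {n R : Type*} [Fintype n] [DecidableEq n]
    [CommRing R] (A : Matrix n n R) (i : n) (v : n → R) :
    (A.updateRow i v).det = ∑ j, v j * A.adjugate j i := by
  rw [← cramer_transpose_apply, cramer_eq_adjugate_mulVec, ← adjugate_transpose]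
  simp [Matrix.mulVec, dotProduct, mul_comm]

theorem Matrix.det_sq_eq_sum_perm_prod {n R : Type*} [Fintype n] [DecidableEq n] [CommRing R]
    (M : Matrix n n R) :
    M.det ^ 2 = ∑ p : Equiv.Perm n × Equiv.Perm n,
      (((Equiv.Perm.sign p.1 * Equiv.Perm.sign p.2 : ℤˣ) : ℤ) : R) *
        ∏ i, M (p.1 i) i * M (p.2 i) i := by
  rw [det_apply', sq, Finset.sum_mul_sum, Fintype.sum_prod_type]
  refine Finset.sum_congr rfl fun p _ => Finset.sum_congr rfl fun q _ => ?_
  rw [Finset.prod_mul_distrib]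
  push_cast
  ring

section Andreief

variable {Y ι : Type*} [MeasurableSpace Y] {ω : Measure Y} [DecidableEq ι]
  {f : ι → Y → ℝ}

lemma MeasureTheory.MemLp.of_integral_mul_self_ne_zero {g : Y → ℝ}
    (hg : AEStronglyMeasurable g ω) (h : ∫ z, g z * g z ∂ω ≠ 0) : MemLp g 2 ω :=
  (memLp_two_iff_integrable_sq hg).2 <| by
    simpa only [sq] using Integrable.of_integral_ne_zero h

variable (hf_meas : ∀ i, AEStronglyMeasurable (f i) ω)
  (hf : ∀ i j, ∫ z, f i z * f j z ∂ω = if i = j then 1 else 0)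
include hf_meas hf

lemma integrable_mul_of_orthonormal (i j : ι) : Integrable (fun z => f i z * f j z) ω :=
  have hL2 : ∀ k, MemLp (f k) 2 ω := fun k =>
    .of_integral_mul_self_ne_zero (hf_meas k) (by simp [hf])
  (hL2 i).integrable_mul (hL2 j)

variable [Fintype ι] [SigmaFinite ω]

lemma integrable_det_sq_of_orthonormal :
    Integrable (fun x : ι → Y => (Matrix.of fun i j => f i (x j)).det ^ 2)
      (Measure.pi fun _ => ω) := by
  simp_rw [Matrix.det_sq_eq_sum_perm_prod, Matrix.of_apply]
  exact integrable_finsetSum _ fun p _ => (Integrable.fintype_prod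
    fun i => integrable_mul_of_orthonormal hf_meas hf (p.1 i) (p.2 i)).const_mul _

lemma integral_det_sq_of_orthonormal :
    ∫ x : ι → Y, (Matrix.of fun i j => f i (x j)).det ^ 2 ∂(Measure.pi fun _ => ω)
      = (Fintype.card ι).factorial := by
  simp_rw [Matrix.det_sq_eq_sum_perm_prod, Matrix.of_apply]
  rw [integral_finsetSum _ fun p _ => (Integrable.fintype_prod
    fun i => integrable_mul_of_orthonormal hf_meas hf (p.1 i) (p.2 i)).const_mul _]
  have hterm : ∀ p : Equiv.Perm ι × Equiv.Perm ι,
      ∫ x : ι → Y, (((Equiv.Perm.sign p.1 * Equiv.Perm.sign p.2 : ℤˣ) : ℤ) : ℝ) *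
        ∏ i, f (p.1 i) (x i) * f (p.2 i) (x i) ∂(Measure.pi fun _ => ω)
        = if p.1 = p.2 then 1 else 0 := by
    rintro ⟨p, q⟩
    rw [integral_const_mul, integral_fintype_prod_eq_prod (fun i z => f (p i) z * f (q i) z)]
    simp only [hf]
    split_ifs with hpq
    · simp [hpq]
    · obtain ⟨i, hi⟩ := not_forall.1 fun h => hpq (Equiv.ext h)
      rw [Finset.prod_eq_zero (Finset.mem_univ i) (if_neg hi), mul_zero]
  rw [Finset.sum_congr rfl fun p _ => hterm p, Fintype.sum_prod_type]
  simp [Fintype.card_perm]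

end Andreief

theorem Submodule.norm_orthogonalProjectionOnto_orthogonal_le {𝕜 E : Type*} [RCLike 𝕜]
    [NormedAddCommGroup E] [InnerProductSpace 𝕜 E] {K : Submodule 𝕜 E}
    [Kᗮ.HasOrthogonalProjection] (v : E) {g : E} (hg : g ∈ K) :
    ‖(Kᗮ.orthogonalProjectionOnto v : E)‖ ≤ ‖v - g‖ :=
  calc ‖(Kᗮ.orthogonalProjectionOnto v : E)‖
      = ‖Kᗮ.orthogonalProjectionOnto (v - g)‖ := by
        rw [map_sub, orthogonalProjectionOnto_orthogonal_apply_eq_zero hg, sub_zero]; rfl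
    _ ≤ ‖v - g‖ := norm_orthogonalProjectionOnto_apply_le _ _

theorem HilbertBasis.hasSum_inner_sq {ι E : Type*} [NormedAddCommGroup E]
    [InnerProductSpace ℝ E] (b : HilbertBasis ι ℝ E) (v : E) :
    HasSum (fun i => ⟪b i, v⟫ ^ 2) (‖v‖ ^ 2) := by
  simpa [← real_inner_self_eq_norm_sq, sq, real_inner_comm] using b.hasSum_inner_mul_inner v v

section RowReplacement

variable {Y F : Type*} [NormedAddCommGroup F] [InnerProductSpace ℝ F]
  {e : ℕ → Y → ℝ} {σ : ℕ → ℝ} {Kf : Y → F}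

lemma inner_sum_adjugate_smul {ι : Type*} [Fintype ι] [DecidableEq ι] {eF : ℕ → F}
    (hKf : ∀ z m, ⟪eF m, Kf z⟫ = √(σ m) * e m z)
    (A : Matrix ι ι ℝ) (x : ι → Y) (n : ι) (m : ℕ) :
    ⟪eF m, ∑ j, A.adjugate j n • Kf (x j)⟫ = √(σ m) * (A.updateRow n fun j => e m (x j)).det := by
  rw [inner_sum, Matrix.det_updateRow_eq_sum_mul_adjugate, Finset.mul_sum]
  refine Finset.sum_congr rfl fun j _ => ?_
  rw [real_inner_smul_right, hKf]
  ring

lemma det_updateRow_of_lt {N : ℕ} (x : Fin N → Y) (n : Fin N) {m : ℕ} (hm : m < N) :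
    ((Matrix.of fun i j : Fin N => e i.val (x j)).updateRow n fun j => e m (x j)).det
      = if m = n.val then (Matrix.of fun i j : Fin N => e i.val (x j)).det else 0 := by
  have hrow : (fun j => e m (x j)) = (Matrix.of fun i j : Fin N => e i.val (x j)) ⟨m, hm⟩ := rfl
  rw [hrow]
  split_ifs with hmn
  · rw [show (⟨m, hm⟩ : Fin N) = n from Fin.ext hmn, Matrix.updateRow_eq_self]
  · exact Matrix.det_updateRow_eq_zero fun h => hmn (congrArg Fin.val h)

lemma exists_mem_span_hasSum_det_updateRow_sq (hσ : ∀ m, 0 ≤ σ m) (b : HilbertBasis ℕ ℝ F)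
    (hKf : ∀ z m, ⟪b m, Kf z⟫ = √(σ m) * e m z) {N : ℕ} (x : Fin N → Y) (n : Fin N) :
    ∃ g ∈ Submodule.span ℝ (Set.range fun j => Kf (x j)),
      HasSum (fun m => σ (N + m) *
          ((Matrix.of fun i j : Fin N => e i.val (x j)).updateRow n
            fun j => e (N + m) (x j)).det ^ 2)
        (‖(√(σ n.val) * (Matrix.of fun i j : Fin N => e i.val (x j)).det) • b n - g‖ ^ 2) := by
  set A := Matrix.of fun i j : Fin N => e i.val (x j)
  set g := ∑ j, A.adjugate j n • Kf (x j)
  refine ⟨g, Submodule.sum_mem _ fun j _ =>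
    Submodule.smul_mem _ _ (Submodule.subset_span ⟨j, rfl⟩), ?_⟩
  set v := (√(σ n.val) * A.det) • b n - g
  have hcoef : ∀ m, ⟪b m, v⟫ = (if m = n.val then √(σ n.val) * A.det else 0)
      - √(σ m) * (A.updateRow n fun j => e m (x j)).det := by
    intro m
    rw [inner_sub_right, real_inner_smul_right, inner_sum_adjugate_smul hKf,
      orthonormal_iff_ite.1 b.orthonormal]
    split_ifs <;> ring
  have hhead : ∑ m ∈ Finset.range N, ⟪b m, v⟫ ^ 2 = 0 := by
    refine Finset.sum_eq_zero fun m hm => ?_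
    rw [hcoef, det_updateRow_of_lt x n (Finset.mem_range.1 hm)]
    split_ifs with h
    · rw [h, sub_self, zero_pow two_ne_zero]
    · simp
  have hsum := b.hasSum_inner_sq v
  rw [← add_zero (‖v‖ ^ 2), ← hhead, ← hasSum_nat_add_iff] at hsum
  refine hsum.congr_fun fun m => ?_
  rw [hcoef, if_neg (by omega), add_comm, zero_sub, neg_sq, mul_pow, Real.sq_sqrt (hσ _)]

lemma exists_hasSum_det_updateRow_sq_ge (hσ : ∀ m, 0 ≤ σ m) (b : HilbertBasis ℕ ℝ F)
    (hKf : ∀ z m, ⟪b m, Kf z⟫ = √(σ m) * e m z) {N : ℕ} (x : Fin N → Y) (n : Fin N) :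
    ∃ s, HasSum (fun m => σ (N + m) *
          ((Matrix.of fun i j : Fin N => e i.val (x j)).updateRow n
            fun j => e (N + m) (x j)).det ^ 2) s ∧
      σ n.val * ‖((Submodule.span ℝ (Set.range fun j => Kf (x j)))ᗮ.orthogonalProjectionOnto
          (b n) : F)‖ ^ 2 * (Matrix.of fun i j : Fin N => e i.val (x j)).det ^ 2 ≤ s := by
  obtain ⟨g, hg, hsum⟩ := exists_mem_span_hasSum_det_updateRow_sq hσ b hKf x n
  refine ⟨_, hsum, ?_⟩
  set T := Submodule.span ℝ (Set.range fun j => Kf (x j))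
  set c := √(σ n.val) * (Matrix.of fun i j : Fin N => e i.val (x j)).det
  calc σ n.val * ‖(Tᗮ.orthogonalProjectionOnto (b n) : F)‖ ^ 2
        * (Matrix.of fun i j : Fin N => e i.val (x j)).det ^ 2
      = ‖(Tᗮ.orthogonalProjectionOnto (c • b n) : F)‖ ^ 2 := by
        rw [map_smul, Submodule.coe_smul, norm_smul, Real.norm_eq_abs, mul_pow, sq_abs, mul_pow,
          Real.sq_sqrt (hσ _)]
        ring
    _ ≤ ‖c • b n - g‖ ^ 2 := by
        gcongr
        exact Submodule.norm_orthogonalProjectionOnto_orthogonal_le _ hg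

lemma exists_hasSum_sum_det_updateRow_sq_ge_sup' (hσ : ∀ m, 0 ≤ σ m) (b : HilbertBasis ℕ ℝ F)
    (hKf : ∀ z m, ⟪b m, Kf z⟫ = √(σ m) * e m z) {N : ℕ}
    (H : (Finset.univ : Finset (Fin N)).Nonempty) (x : Fin N → Y) :
    ∃ s, HasSum (fun m => ∑ n : Fin N, σ (N + m) *
          ((Matrix.of fun i j : Fin N => e i.val (x j)).updateRow n
            fun j => e (N + m) (x j)).det ^ 2) s ∧
      Finset.univ.sup' H (fun n : Fin N => σ n.val *
          ‖((Submodule.span ℝ (Set.range fun j => Kf (x j)))ᗮ.orthogonalProjectionOnto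
            (b n.val) : F)‖ ^ 2) * (Matrix.of fun i j : Fin N => e i.val (x j)).det ^ 2 ≤ s := by
  choose s hs hle using exists_hasSum_det_updateRow_sq_ge hσ b hKf x
  obtain ⟨n₀, -, hn₀⟩ := Finset.exists_mem_eq_sup' H fun n : Fin N => σ n.val *
    ‖((Submodule.span ℝ (Set.range fun j => Kf (x j)))ᗮ.orthogonalProjectionOnto (b n.val) : F)‖ ^ 2
  refine ⟨∑ n, s n, hasSum_sum fun n _ => hs n, ?_⟩
  rw [hn₀]
  exact (hle n₀).trans <| Finset.single_le_sum
    (fun n _ => (hs n).nonneg fun m => mul_nonneg (hσ _) (sq_nonneg _)) (Finset.mem_univ n₀)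

end RowReplacement

theorem MeasureTheory.integral_le_of_le_hasSum {α ι : Type*} [MeasurableSpace α]
    {μ : Measure α} [Countable ι] {f s : α → ℝ} {φ : ι → α → ℝ} {S : ℝ}
    (hf : ∀ x, 0 ≤ f x) (hφ : ∀ i x, 0 ≤ φ i x) (hφ_int : ∀ i, Integrable (φ i) μ)
    (hφ_sum : ∀ x, HasSum (φ · x) (s x)) (hfs : ∀ x, f x ≤ s x) (hS : HasSum (fun i => ∫ x, φ i x ∂μ) S) :
    ∫ x, f x ∂μ ≤ S := by
  have hS_nonneg : 0 ≤ S := hS.nonneg fun i => integral_nonneg (hφ i)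
  -- `f` is not assumed measurable; if it is not integrable, `∫ f = 0` by convention.
  by_cases hf_int : Integrable f μ
  swap
  · rw [integral_undef hf_int]; exact hS_nonneg
  rw [← ENNReal.ofReal_le_ofReal_iff hS_nonneg,
    ofReal_integral_eq_lintegral_ofReal hf_int (ae_of_all _ hf)]
  calc ∫⁻ x, ENNReal.ofReal (f x) ∂μ
      ≤ ∫⁻ x, ∑' i, ENNReal.ofReal (φ i x) ∂μ := lintegral_mono fun x => by
        rw [← ENNReal.ofReal_tsum_of_nonneg (hφ · x) (hφ_sum x).summable, (hφ_sum x).tsum_eq]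
        exact ENNReal.ofReal_le_ofReal (hfs x)
    _ = ∑' i, ∫⁻ x, ENNReal.ofReal (φ i x) ∂μ :=
        lintegral_tsum fun i => (hφ_int i).aemeasurable.ennreal_ofReal
    _ = ∑' i, ENNReal.ofReal (∫ x, φ i x ∂μ) := by
        simp_rw [ofReal_integral_eq_lintegral_ofReal (hφ_int _) (ae_of_all _ (hφ _))]
    _ = ENNReal.ofReal S := by
        rw [← ENNReal.ofReal_tsum_of_nonneg (fun i => integral_nonneg (hφ i)) hS.summable,
          hS.tsum_eq]

theorem le_mul_sum_Icc_inv_factorial_sq_mul_pow {a t : ℝ} (ha : 0 < a) (ht : 0 ≤ t) {N : ℕ}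
    (hN : 0 < N) :
    t ≤ a * ∑ ℓ ∈ Finset.Icc 1 N, (1 / (ℓ.factorial : ℝ) ^ 2) * (t / a) ^ ℓ :=
  calc t = a * ((1 / ((1 : ℕ).factorial : ℝ) ^ 2) * (t / a) ^ 1) := by field_simp; simp
    _ ≤ a * ∑ ℓ ∈ Finset.Icc 1 N, (1 / (ℓ.factorial : ℝ) ^ 2) * (t / a) ^ ℓ := by
      gcongr
      exact Finset.single_le_sum (f := fun ℓ => (1 / (ℓ.factorial : ℝ) ^ 2) * (t / a) ^ ℓ)
        (fun ℓ _ => by positivity) (Finset.mem_Icc.2 ⟨le_rfl, hN⟩)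

lemma integrable_det_updateRow_sq_and_integral_eq {Y : Type*} [MeasurableSpace Y]
    {ω : Measure Y} [SigmaFinite ω] {e : ℕ → Y → ℝ} (he_meas : ∀ m, Measurable (e m))
    (he_on : ∀ m n : ℕ, ∫ z, e m z * e n z ∂ω = if m = n then 1 else 0)
    {N : ℕ} (n : Fin N) {k : ℕ} (hk : N ≤ k) :
    Integrable (fun x : Fin N → Y =>
        ((Matrix.of fun i j : Fin N => e i.val (x j)).updateRow n fun j => e k (x j)).det ^ 2)
      (Measure.pi fun _ => ω) ∧
    ∫ x : Fin N → Y,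
        ((Matrix.of fun i j : Fin N => e i.val (x j)).updateRow n fun j => e k (x j)).det ^ 2
      ∂(Measure.pi fun _ => ω) = N.factorial := by
  set ρ : Fin N → ℕ := Function.update Fin.val n k
  have hρ : Function.Injective ρ := by
    intro i j hij
    by_cases hi : i = n <;> by_cases hj : j = n <;>
      simp_all [ρ, Fin.ext_iff] <;> omega
  have hrow : ∀ x : Fin N → Y,
      ((Matrix.of fun i j : Fin N => e i.val (x j)).updateRow n fun j => e k (x j))
        = Matrix.of fun i j => e (ρ i) (x j) := by
    intro x
    ext i j
    by_cases hi : i = n <;> simp [ρ, Matrix.updateRow_apply, hi]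
  have hmeas : ∀ i, AEStronglyMeasurable (e (ρ i)) ω := fun i => (he_meas _).aestronglyMeasurable
  have hon : ∀ i j, ∫ z, e (ρ i) z * e (ρ j) z ∂ω = if i = j then 1 else 0 := by
    simp [he_on, hρ.eq_iff]
  simp_rw [hrow]
  exact ⟨integrable_det_sq_of_orthonormal hmeas hon,
    by rw [integral_det_sq_of_orthonormal hmeas hon, Fintype.card_fin]⟩

theorem stmt16_general {Y : Type*} [MeasurableSpace Y] (ω : Measure Y) [IsProbabilityMeasure ω]
    (e : ℕ → Y → ℝ) (he_meas : ∀ m, Measurable (e m))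
    (he_on : ∀ m n : ℕ, ∫ z, e m z * e n z ∂ω = if m = n then 1 else 0)
    (σ : ℕ → ℝ) (hσpos : ∀ m, 0 < σ m) (hσsum : Summable σ)
    {F : Type*} [NormedAddCommGroup F] [InnerProductSpace ℝ F] [CompleteSpace F]
    (eF : ℕ → F) (heF : Orthonormal ℝ eF)
    (heFtot : (Submodule.span ℝ (Set.range eF)).topologicalClosure = ⊤)
    (Kf : Y → F) (hKf : ∀ (z : Y) (m : ℕ), ⟪eF m, Kf z⟫ = Real.sqrt (σ m) * e m z)
    (N : ℕ) (hN : 0 < N)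
    (rN : ℝ) (hrN : rN = ∑' m : ℕ, σ (N + m)) :
    (1 / (N.factorial : ℝ)) *
        ∫ x : Fin N → Y,
          (Finset.univ.sup' (Finset.univ_nonempty_iff.mpr ⟨⟨0, hN⟩⟩)
              (fun n : Fin N =>
                σ n.val *
                  ‖(Submodule.orthogonalProjectionOnto (Submodule.span ℝ (Set.range fun j => Kf (x j)))ᗮ
                      (eF n.val) : F)‖ ^ 2)) *
            (Matrix.of fun i j : Fin N => e i.val (x j)).det ^ 2
          ∂(Measure.pi fun _ : Fin N => ω)
      ≤ σ 0 * ∑ ℓ ∈ Finset.Icc 1 N, (1 / (ℓ.factorial : ℝ) ^ 2) * ((N : ℝ) * rN / σ 0) ^ ℓ := by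
  obtain ⟨b, rfl⟩ : ∃ b : HilbertBasis ℕ ℝ F, ⇑b = eF :=
    ⟨_, HilbertBasis.coe_mk heF heFtot.ge⟩
  have hσ : ∀ m, 0 ≤ σ m := fun m => (hσpos m).le
  choose s hs hle using exists_hasSum_sum_det_updateRow_sq_ge_sup' hσ b hKf
    (Finset.univ_nonempty_iff.mpr ⟨⟨0, hN⟩⟩)
  have hdet := fun (n : Fin N) (m : ℕ) =>
    integrable_det_updateRow_sq_and_integral_eq he_meas he_on n (Nat.le_add_right N m)
  have htail : HasSum (fun m => σ (N + m)) rN :=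
    hrN ▸ (hσsum.comp_injective (add_right_injective N)).hasSum
  refine (mul_le_mul_of_nonneg_left (integral_le_of_le_hasSum
    (S := ∑ _n : Fin N, rN * N.factorial) ?_ ?_ ?_ hs hle ?_) (by positivity)).trans ?_
  · exact fun x => mul_nonneg (Finset.le_sup'_of_le _ (Finset.mem_univ ⟨0, hN⟩)
      (mul_nonneg (hσ _) (sq_nonneg _))) (sq_nonneg _)
  · exact fun m x => Finset.sum_nonneg fun n _ => mul_nonneg (hσ _) (sq_nonneg _)
  · exact fun m => integrable_finsetSum _ fun n _ => (hdet n m).1.const_mul _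
  · simp_rw [integral_finsetSum _ fun n _ => (hdet n _).1.const_mul _, integral_const_mul,
      (hdet _ _).2]
    exact hasSum_sum fun n _ => htail.mul_right _
  calc 1 / (N.factorial : ℝ) * ∑ _n : Fin N, rN * N.factorial = N * rN := by
        rw [Finset.sum_const, Finset.card_univ, Fintype.card_fin, nsmul_eq_mul]
        field_simp
    _ ≤ _ := le_mul_sum_Icc_inv_factorial_sq_mul_pow (hσpos 0)
        (mul_nonneg N.cast_nonneg (htail.nonneg fun m => hσ _)) hN

/-- Under the projection DPP,
`E_DPP[max_{n∈[N]} σ_n ‖Π_{T(x)^⊥} e_n^F‖²] ≤ σ_1 ∑_{ℓ=1}^N (1/ℓ!²)(N r_N/σ_1)^ℓ`.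
(Indices are 0-based: `σ 0` is the paper's `σ_1`.) -/
theorem stmt16 {Y : Type*} [MeasurableSpace Y] (ω : Measure Y) [IsProbabilityMeasure ω]
    (e : ℕ → Y → ℝ) (he_meas : ∀ m, Measurable (e m))
    (he_on : ∀ m n : ℕ, ∫ z, e m z * e n z ∂ω = if m = n then 1 else 0)
    (σ : ℕ → ℝ) (hσpos : ∀ m, 0 < σ m) (hσanti : Antitone σ) (hσsum : Summable σ)
    (hdiag : ∀ z : Y, Summable fun m => σ m * (e m z) ^ 2)
    {F : Type*} [NormedAddCommGroup F] [InnerProductSpace ℝ F] [CompleteSpace F]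
    (eF : ℕ → F) (heF : Orthonormal ℝ eF)
    (heFtot : (Submodule.span ℝ (Set.range eF)).topologicalClosure = ⊤)
    (Kf : Y → F) (hKf : ∀ (z : Y) (m : ℕ), ⟪eF m, Kf z⟫ = Real.sqrt (σ m) * e m z)
    (N : ℕ) (hN : 0 < N)
    (rN : ℝ) (hrN : rN = ∑' m : ℕ, σ (N + m)) :
    (1 / (N.factorial : ℝ)) *
        ∫ x : Fin N → Y,
          (Finset.univ.sup' (Finset.univ_nonempty_iff.mpr ⟨⟨0, hN⟩⟩)
              (fun n : Fin N =>
                σ n.val *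
                  ‖(Submodule.orthogonalProjectionOnto (Submodule.span ℝ (Set.range fun j => Kf (x j)))ᗮ
                      (eF n.val) : F)‖ ^ 2)) *
            (Matrix.of fun i j : Fin N => e i.val (x j)).det ^ 2
          ∂(Measure.pi fun _ : Fin N => ω)
      ≤ σ 0 * ∑ ℓ ∈ Finset.Icc 1 N, (1 / (ℓ.factorial : ℝ) ^ 2) * ((N : ℝ) * rN / σ 0) ^ ℓ :=
  stmt16_general ω e he_meas he_on σ hσpos hσsum eF heF heFtot Kf hKf N hN rN hrN
end
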